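/- Let V_1 and V_2 be doubly commuting isometries on a complex Hilbert space H. Then H decomposes into the orthogonal sum of four subspaces H_{11} ⊕ H_{12} ⊕ H_{21} ⊕ H_{22}, each jointly reducing V_1 and V_2, such that on H_{11} both restrictions are unitary, on H_{12} the restriction of V_1 is unitary and of V_2 is a pure isometry, on H_{21} the restriction of V_1 is a pure isometry and of V_2 is unitary, and on H_{22} both restrictions are pure isometries. Some of these subspaces may be zero. -/

import Mathlib

open ContinuousLinearMap Filter
open scoped InnerProductSpace

noncomputable section

variable {H : Type*} [NormedAddCommGroup H] [InnerProductSpace ℂ H] [CompleteSpace H]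

/-- K is a reducing subspace for T. -/
def Reduces (T : H →L[ℂ] H) (K : Submodule ℂ H) : Prop :=
  (∀ h ∈ K, T h ∈ K) ∧ (∀ h ∈ K, adjoint T h ∈ K)

/-- The restriction of T to K is a unitary of K (a surjective isometry of K). -/
def UnitaryOn (T : H →L[ℂ] H) (K : Submodule ℂ H) : Prop :=
  (∀ h ∈ K, ‖T h‖ = ‖h‖) ∧ (∀ h ∈ K, ∃ g ∈ K, T g = h)

/-- The restriction of T to K is a pure isometry (unilateral shift). -/
def PureIsometryOn (T : H →L[ℂ] H) (K : Submodule ℂ H) : Prop :=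
  (∀ h ∈ K, ‖T h‖ = ‖h‖) ∧
    ∀ h ∈ K, Tendsto (fun n : ℕ => ((adjoint T) ^ n) h) atTop (nhds 0)

/-- The restriction of T to K is completely non-unitary. -/
def CnuOn (T : H →L[ℂ] H) (K : Submodule ℂ H) : Prop :=
  ∀ L : Submodule ℂ H, L ≤ K → IsClosed (L : Set H) →
    Reduces T L → UnitaryOn T L → L = ⊥

namespace SWAux

/-- The positive operator `V^n (V*)^n`. -/
def Pn (V : H →L[ℂ] H) (n : ℕ) : H →L[ℂ] H := V ^ n * (adjoint V) ^ n

lemma star_Pn (V : H →L[ℂ] H) (n : ℕ) : star (Pn V n) = Pn V n := by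
  simp [Pn, star_mul, star_pow, ← star_eq_adjoint]

lemma adjoint_Pn (V : H →L[ℂ] H) (n : ℕ) : adjoint (Pn V n) = Pn V n := by
  rw [← star_eq_adjoint, star_Pn]

lemma pow_adj_mul_pow (V : H →L[ℂ] H) (hV : adjoint V * V = 1) (n : ℕ) :
    (adjoint V) ^ n * V ^ n = 1 := by
  induction n with
  | zero => simp
  | succ n ih =>
    rw [pow_succ, pow_succ', mul_assoc, ← mul_assoc (adjoint V), hV, one_mul, ih]

lemma adj_app_V (V : H →L[ℂ] H) (hV : adjoint V * V = 1) (x : H) :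
    adjoint V (V x) = x := by
  have := congrArg (fun T : H →L[ℂ] H => T x) hV
  simpa using this

lemma Pn_mul_Pn (V : H →L[ℂ] H) (hV : adjoint V * V = 1) {n m : ℕ} (hnm : n ≤ m) :
    Pn V n * Pn V m = Pn V m := by
  obtain ⟨k, rfl⟩ := Nat.exists_eq_add_of_le hnm
  unfold Pn
  rw [pow_add V n k]
  simp only [mul_assoc]
  congr 1
  rw [← mul_assoc ((adjoint V) ^ n), pow_adj_mul_pow V hV n, one_mul]

lemma norm_pow_apply (V : H →L[ℂ] H) (hV : adjoint V * V = 1) (n : ℕ) (h : H) :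
    ‖(V ^ n) h‖ = ‖h‖ := by
  have key : ⟪(V ^ n) h, (V ^ n) h⟫_ℂ = ⟪h, h⟫_ℂ := by
    rw [← adjoint_inner_right (V ^ n) h ((V ^ n) h)]
    congr 1
    have h1 : adjoint (V ^ n) = (adjoint V) ^ n := by
      rw [← star_eq_adjoint, star_pow, star_eq_adjoint]
    rw [h1, ← ContinuousLinearMap.mul_apply, pow_adj_mul_pow V hV n, ContinuousLinearMap.one_apply]
  rw [@norm_eq_sqrt_re_inner ℂ, @norm_eq_sqrt_re_inner ℂ H, key]

lemma norm_apply (V : H →L[ℂ] H) (hV : adjoint V * V = 1) (h : H) : ‖V h‖ = ‖h‖ := by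
  simpa using norm_pow_apply V hV 1 h

lemma norm_adj_apply_le (V : H →L[ℂ] H) (hV : adjoint V * V = 1) (x : H) :
    ‖adjoint V x‖ ≤ ‖x‖ := by
  rcases eq_or_lt_of_le (norm_nonneg (adjoint V x)) with h0 | h0
  · rw [← h0]; exact norm_nonneg x
  · have key : ‖adjoint V x‖ * ‖adjoint V x‖ ≤ ‖x‖ * ‖adjoint V x‖ := by
      calc ‖adjoint V x‖ * ‖adjoint V x‖
          = RCLike.re ⟪adjoint V x, adjoint V x⟫_ℂ := by
            rw [← sq, ← inner_self_eq_norm_sq (𝕜 := ℂ)]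
        _ = RCLike.re ⟪x, V (adjoint V x)⟫_ℂ := by rw [adjoint_inner_left]
        _ ≤ ‖x‖ * ‖V (adjoint V x)‖ :=
            le_trans (le_trans (le_abs_self _) (RCLike.abs_re_le_norm _)) (norm_inner_le_norm _ _)
        _ = ‖x‖ * ‖adjoint V x‖ := by rw [norm_apply V hV]
    exact le_of_mul_le_mul_right key h0



/-- The unitary part: `⋂ n, range (V^n)`, as kernels of `Pn V n - 1`. -/
def Eu (V : H →L[ℂ] H) : Submodule ℂ H := ⨅ n : ℕ, LinearMap.ker ((Pn V n - 1 : H →L[ℂ] H) : H →ₗ[ℂ] H)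

lemma mem_Eu {V : H →L[ℂ] H} {h : H} : h ∈ Eu V ↔ ∀ n, Pn V n h = h := by
  simp [Eu, Submodule.mem_iInf, LinearMap.mem_ker, ContinuousLinearMap.sub_apply,
    ContinuousLinearMap.one_apply, sub_eq_zero]

lemma isClosed_Eu (V : H →L[ℂ] H) : IsClosed ((Eu V : Set H)) := by
  have : (Eu V : Set H) = ⋂ n, (LinearMap.ker ((Pn V n - 1 : H →L[ℂ] H) : H →ₗ[ℂ] H) : Set H) := by
    simp [Eu]
  rw [this]
  exact isClosed_iInter fun n => (ContinuousLinearMap.isClosed_ker _)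

lemma Pn_inner_symm (V : H →L[ℂ] H) (n : ℕ) (x y : H) :
    ⟪(Pn V n) x, y⟫_ℂ = ⟪x, (Pn V n) y⟫_ℂ := by
  conv_lhs => rw [← adjoint_Pn V n]
  rw [adjoint_inner_left]

lemma inner_Pn_self (V : H →L[ℂ] H) (n : ℕ) (h : H) :
    ⟪(Pn V n) h, h⟫_ℂ = (‖((adjoint V) ^ n) h‖ : ℂ) ^ 2 := by
  have h1 : (Pn V n) h = adjoint ((adjoint V) ^ n) (((adjoint V) ^ n) h) := by
    have : adjoint ((adjoint V) ^ n) = V ^ n := by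
      rw [← star_eq_adjoint, ← star_eq_adjoint, star_pow, star_star]
    rw [this]; rfl
  rw [h1, adjoint_inner_left, inner_self_eq_norm_sq_to_K]
  norm_cast

lemma r_antitone (V : H →L[ℂ] H) (hV : adjoint V * V = 1) (h : H) :
    Antitone (fun n => ‖((adjoint V) ^ n) h‖) := by
  refine antitone_nat_of_succ_le fun n => ?_
  have : ((adjoint V) ^ (n + 1)) h = adjoint V (((adjoint V) ^ n) h) := by
    rw [pow_succ']; rfl
  rw [this]
  exact norm_adj_apply_le V hV _

/-- Main convergence: `Pn V n h` converges to a vector of `Eu V` whose difference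
from `h` is orthogonal to `Eu V`. -/
lemma exists_lim_Pn (V : H →L[ℂ] H) (hV : adjoint V * V = 1) (h : H) :
    ∃ g : H, Tendsto (fun n => (Pn V n) h) atTop (nhds g) ∧ g ∈ Eu V ∧
      ∀ k ∈ Eu V, ⟪k, h - g⟫_ℂ = 0 := by
  set r : ℕ → ℝ := fun n => ‖((adjoint V) ^ n) h‖ ^ 2 with hr
  have hranti : Antitone r := fun n m hnm => by
    have := r_antitone V hV h hnm
    exact pow_le_pow_left₀ (norm_nonneg _) this 2
  have hrnonneg : ∀ n, 0 ≤ r n := fun n => sq_nonneg _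
  -- inner product identities
  have hinner : ∀ n m : ℕ, n ≤ m → ⟪(Pn V n) h, (Pn V m) h⟫_ℂ = (r m : ℂ) := by
    intro n m hnm
    rw [Pn_inner_symm, ← ContinuousLinearMap.mul_apply, Pn_mul_Pn V hV hnm,
      ← Pn_inner_symm, inner_Pn_self]
    norm_cast
  have hnormsq : ∀ n m : ℕ, n ≤ m → ‖(Pn V n) h - (Pn V m) h‖ ^ 2 = r n - r m := by
    intro n m hnm
    rw [@norm_sub_sq ℂ]
    have e1 : (‖(Pn V n) h‖ : ℝ) ^ 2 = r n := by
      have := hinner n n le_rfl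
      have h2 : RCLike.re ⟪(Pn V n) h, (Pn V n) h⟫_ℂ = r n := by rw [this]; norm_num
      rw [← inner_self_eq_norm_sq (𝕜 := ℂ), h2]
    have e2 : (‖(Pn V m) h‖ : ℝ) ^ 2 = r m := by
      have := hinner m m le_rfl
      have h2 : RCLike.re ⟪(Pn V m) h, (Pn V m) h⟫_ℂ = r m := by rw [this]; norm_num
      rw [← inner_self_eq_norm_sq (𝕜 := ℂ), h2]
    have e3 : RCLike.re ⟪(Pn V n) h, (Pn V m) h⟫_ℂ = r m := by
      rw [hinner n m hnm]; norm_num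
    rw [e1, e2, e3]; ring
  -- r converges
  have hrtends : Tendsto r atTop (nhds (⨅ n, r n)) :=
    tendsto_atTop_ciInf hranti ⟨0, fun x ⟨n, hn⟩ => hn ▸ hrnonneg n⟩
  have hrlb : ∀ n, (⨅ m, r m) ≤ r n := fun n =>
    ciInf_le ⟨0, fun x ⟨m, hm⟩ => hm ▸ hrnonneg m⟩ n
  -- Cauchy
  have hcauchy : CauchySeq (fun n => (Pn V n) h) := by
    rw [Metric.cauchySeq_iff']
    intro ε hε
    obtain ⟨N, hN⟩ := (Metric.tendsto_atTop.1 hrtends) (ε ^ 2) (by positivity)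
    refine ⟨N, fun n hn => ?_⟩
    have h1 : ‖(Pn V N) h - (Pn V n) h‖ ^ 2 = r N - r n := hnormsq N n hn
    have h2 : r N - r n < ε ^ 2 := by
      have := hN N le_rfl
      rw [Real.dist_eq, abs_lt] at this
      have := this.2
      have h3 := hrlb n
      linarith
    rw [dist_eq_norm]
    have h4 : ‖(Pn V n) h - (Pn V N) h‖ ^ 2 < ε ^ 2 := by
      rw [norm_sub_rev]; rw [h1]; exact h2
    exact lt_of_pow_lt_pow_left₀ 2 hε.le h4
  obtain ⟨g, hg⟩ := cauchySeq_tendsto_of_complete hcauchy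
  refine ⟨g, hg, ?_, ?_⟩
  · rw [mem_Eu]
    intro k
    have t1 : Tendsto (fun n => (Pn V k) ((Pn V n) h)) atTop (nhds ((Pn V k) g)) :=
      ((Pn V k).continuous.tendsto g).comp hg
    have t2 : Tendsto (fun n => (Pn V k) ((Pn V n) h)) atTop (nhds g) := by
      apply hg.congr'
      filter_upwards [eventually_ge_atTop k] with n hn
      rw [← ContinuousLinearMap.mul_apply, Pn_mul_Pn V hV hn]
    exact tendsto_nhds_unique t1 t2
  · intro k hk
    rw [mem_Eu] at hk
    have t1 : Tendsto (fun n => ⟪k, (Pn V n) h⟫_ℂ) atTop (nhds ⟪k, g⟫_ℂ) :=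
      tendsto_const_nhds.inner hg
    have t2 : (fun n => ⟪k, (Pn V n) h⟫_ℂ) = fun _ => ⟪k, h⟫_ℂ := by
      funext n
      rw [← Pn_inner_symm, hk n]
    rw [t2] at t1
    have : ⟪k, g⟫_ℂ = ⟪k, h⟫_ℂ := (tendsto_nhds_unique tendsto_const_nhds t1).symm
    rw [inner_sub_right, this, sub_self]

-- Reduces is defined in the outer file; we restate it here locally for the aux development.
def Red (T : H →L[ℂ] H) (K : Submodule ℂ H) : Prop :=
  (∀ h ∈ K, T h ∈ K) ∧ (∀ h ∈ K, adjoint T h ∈ K)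

lemma Red.orthogonal {T : H →L[ℂ] H} {K : Submodule ℂ H} (hK : Red T K) : Red T Kᗮ := by
  constructor
  · intro h hh
    rw [Submodule.mem_orthogonal] at *
    intro u hu
    rw [← adjoint_inner_left]
    exact hh _ (hK.2 u hu)
  · intro h hh
    rw [Submodule.mem_orthogonal] at *
    intro u hu
    rw [adjoint_inner_right]
    exact hh _ (hK.1 u hu)

lemma Red.inf {T : H →L[ℂ] H} {K L : Submodule ℂ H} (hK : Red T K) (hL : Red T L) :
    Red T (K ⊓ L) :=
  ⟨fun h hh => ⟨hK.1 h hh.1, hL.1 h hh.2⟩, fun h hh => ⟨hK.2 h hh.1, hL.2 h hh.2⟩⟩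

lemma red_Eu_self (V : H →L[ℂ] H) (hV : adjoint V * V = 1) : Red V (Eu V) := by
  constructor
  · intro h hh
    rw [mem_Eu] at *
    intro n
    cases n with
    | zero => simp [Pn]
    | succ n =>
      show (V ^ (n+1) * (adjoint V) ^ (n+1)) (V h) = V h
      rw [pow_succ' V, pow_succ (adjoint V)]
      simp only [ContinuousLinearMap.mul_apply]
      rw [adj_app_V V hV]
      have := hh n
      show V ((Pn V n) h) = V h
      rw [this]
  · intro h hh
    rw [mem_Eu] at *
    intro n
    have h1 := hh (n + 1)
    conv_rhs => rw [← h1]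
    show (V ^ n * (adjoint V) ^ n) (adjoint V h) = adjoint V ((V ^ (n+1) * (adjoint V) ^ (n+1)) h)
    rw [pow_succ' V, pow_succ (adjoint V)]
    simp only [ContinuousLinearMap.mul_apply]
    rw [adj_app_V V hV]

lemma comm_Pn {V B : H →L[ℂ] H} (h1 : B * V = V * B) (h2 : B * adjoint V = adjoint V * B)
    (n : ℕ) : B * Pn V n = Pn V n * B := by
  have p1 : B * V ^ n = V ^ n * B := (Commute.pow_right h1 n)
  have p2 : B * (adjoint V) ^ n = (adjoint V) ^ n * B := (Commute.pow_right h2 n)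
  unfold Pn
  calc B * (V ^ n * (adjoint V) ^ n) = B * V ^ n * (adjoint V) ^ n := by rw [mul_assoc]
    _ = V ^ n * (B * (adjoint V) ^ n) := by rw [p1, mul_assoc]
    _ = V ^ n * (adjoint V) ^ n * B := by rw [p2, mul_assoc]

lemma maps_Eu {V B : H →L[ℂ] H} (hc : ∀ n, B * Pn V n = Pn V n * B) :
    ∀ h ∈ Eu V, B h ∈ Eu V := by
  intro h hh
  rw [mem_Eu] at *
  intro n
  have := congrArg (fun T : H →L[ℂ] H => T h) (hc n)
  simp only [ContinuousLinearMap.mul_apply] at this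
  rw [← this, hh n]

instance (V : H →L[ℂ] H) : Submodule.HasOrthogonalProjection (Eu V) :=
  haveI : CompleteSpace (Eu V) := (isClosed_Eu V).completeSpace_coe
  Submodule.HasOrthogonalProjection.ofCompleteSpace (Eu V)

/-- `Pn V n h` converges to the orthogonal projection of `h` onto `Eu V`. -/
lemma tendsto_Pn_proj (V : H →L[ℂ] H) (hV : adjoint V * V = 1) (h : H) :
    Tendsto (fun n => (Pn V n) h) atTop
      (nhds ((Submodule.orthogonalProjection (Eu V) h : H))) := by
  obtain ⟨g, hg, hgmem, hgorth⟩ := exists_lim_Pn V hV h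
  have : (Submodule.orthogonalProjection (Eu V) h : H) = g := by
    apply Submodule.eq_starProjection_of_mem_of_inner_eq_zero hgmem
    intro w hw
    rw [← inner_conj_symm, hgorth w hw, map_zero]
  rw [this]
  exact hg

/-- On the orthogonal complement of `Eu V`, the adjoint powers tend to zero. -/
lemma pure_on_orthogonal (V : H →L[ℂ] H) (hV : adjoint V * V = 1) {h : H}
    (hh : h ∈ (Eu V)ᗮ) :
    Tendsto (fun n : ℕ => ((adjoint V) ^ n) h) atTop (nhds 0) := by
  obtain ⟨g, hg, hgmem, _⟩ := exists_lim_Pn V hV h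
  have hgh : ⟪g, h⟫_ℂ = 0 := (Submodule.mem_orthogonal _ _).1 hh g hgmem
  have t1 : Tendsto (fun n => ⟪(Pn V n) h, h⟫_ℂ) atTop (nhds ⟪g, h⟫_ℂ) :=
    hg.inner tendsto_const_nhds
  rw [hgh] at t1
  have t3 : Tendsto (fun n => (‖((adjoint V) ^ n) h‖ : ℂ) ^ 2) atTop (nhds 0) := by
    have heq : (fun n => (‖((adjoint V) ^ n) h‖ : ℂ) ^ 2) = fun n => ⟪(Pn V n) h, h⟫_ℂ := by
      funext n; rw [inner_Pn_self]
    rw [heq]; exact t1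
  have t4 := (Complex.continuous_re.tendsto 0).comp t3
  simp only [Complex.zero_re] at t4
  have t2 : Tendsto (fun n => ‖((adjoint V) ^ n) h‖ ^ 2) atTop (nhds 0) := by
    have heq2 : (Complex.re ∘ fun n => (‖((adjoint V) ^ n) h‖ : ℂ) ^ 2)
        = fun n => ‖((adjoint V) ^ n) h‖ ^ 2 := by
      funext n; simp only [Function.comp_apply]; norm_cast
    rwa [heq2] at t4
  rw [tendsto_zero_iff_norm_tendsto_zero]
  have t5 := (Real.continuous_sqrt.tendsto 0).comp t2
  simp only [Real.sqrt_zero] at t5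
  have heq3 : (Real.sqrt ∘ fun n => ‖((adjoint V) ^ n) h‖ ^ 2)
      = fun n => ‖((adjoint V) ^ n) h‖ := by
    funext n; simp only [Function.comp_apply]; rw [Real.sqrt_sq (norm_nonneg _)]
  rwa [heq3] at t5

lemma isClosed_inf {K L : Submodule ℂ H} (hK : IsClosed (K : Set H))
    (hL : IsClosed (L : Set H)) : IsClosed ((K ⊓ L : Submodule ℂ H) : Set H) := by
  have : ((K ⊓ L : Submodule ℂ H) : Set H) = (K : Set H) ∩ (L : Set H) := rfl
  rw [this]; exact hK.inter hL

end SWAux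


open SWAux in
theorem slocinski_wold_decomposition
    (V₁ V₂ : H →L[ℂ] H)
    (hV₁ : adjoint V₁ * V₁ = 1) (hV₂ : adjoint V₂ * V₂ = 1)
    (hcomm : V₁ * V₂ = V₂ * V₁) (hdcomm : V₁ * adjoint V₂ = adjoint V₂ * V₁) :
    ∃ H₁₁ H₁₂ H₂₁ H₂₂ : Submodule ℂ H,
      IsClosed (H₁₁ : Set H) ∧ IsClosed (H₁₂ : Set H) ∧
      IsClosed (H₂₁ : Set H) ∧ IsClosed (H₂₂ : Set H) ∧
      (∀ x ∈ H₁₁, ∀ y ∈ H₁₂, ⟪x, y⟫_ℂ = 0) ∧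
      (∀ x ∈ H₁₁, ∀ y ∈ H₂₁, ⟪x, y⟫_ℂ = 0) ∧
      (∀ x ∈ H₁₁, ∀ y ∈ H₂₂, ⟪x, y⟫_ℂ = 0) ∧
      (∀ x ∈ H₁₂, ∀ y ∈ H₂₁, ⟪x, y⟫_ℂ = 0) ∧
      (∀ x ∈ H₁₂, ∀ y ∈ H₂₂, ⟪x, y⟫_ℂ = 0) ∧
      (∀ x ∈ H₂₁, ∀ y ∈ H₂₂, ⟪x, y⟫_ℂ = 0) ∧
      H₁₁ ⊔ H₁₂ ⊔ H₂₁ ⊔ H₂₂ = ⊤ ∧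
      (Reduces V₁ H₁₁ ∧ Reduces V₂ H₁₁) ∧
      (Reduces V₁ H₁₂ ∧ Reduces V₂ H₁₂) ∧
      (Reduces V₁ H₂₁ ∧ Reduces V₂ H₂₁) ∧
      (Reduces V₁ H₂₂ ∧ Reduces V₂ H₂₂) ∧
      (UnitaryOn V₁ H₁₁ ∧ UnitaryOn V₂ H₁₁) ∧
      (UnitaryOn V₁ H₁₂ ∧ PureIsometryOn V₂ H₁₂) ∧
      (PureIsometryOn V₁ H₂₁ ∧ UnitaryOn V₂ H₂₁) ∧
      (PureIsometryOn V₁ H₂₂ ∧ PureIsometryOn V₂ H₂₂) := by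
  classical
  set E₁ := SWAux.Eu V₁ with hE₁
  set E₂ := SWAux.Eu V₂ with hE₂
  have c2 : V₂ * adjoint V₁ = adjoint V₁ * V₂ := by
    have h := congrArg star hdcomm
    simp only [star_mul, ← star_eq_adjoint, star_star] at h
    rw [← star_eq_adjoint]
    exact h
  have c4 : adjoint V₂ * adjoint V₁ = adjoint V₁ * adjoint V₂ := by
    have h := congrArg star hcomm
    simp only [star_mul, ← star_eq_adjoint] at h
    rw [← star_eq_adjoint, ← star_eq_adjoint]
    exact h
  have comm1 : ∀ n, V₂ * Pn V₁ n = Pn V₁ n * V₂ := fun n => comm_Pn hcomm.symm c2 n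
  have comm2 : ∀ n, adjoint V₂ * Pn V₁ n = Pn V₁ n * adjoint V₂ :=
    fun n => comm_Pn hdcomm.symm c4 n
  have comm3 : ∀ n, V₁ * Pn V₂ n = Pn V₂ n * V₁ := fun n => comm_Pn hcomm hdcomm n
  have comm4 : ∀ n, adjoint V₁ * Pn V₂ n = Pn V₂ n * adjoint V₁ :=
    fun n => comm_Pn c2.symm c4.symm n
  have commP : ∀ n m, Pn V₂ m * Pn V₁ n = Pn V₁ n * Pn V₂ m :=
    fun n m => comm_Pn (comm3 m).symm (comm4 m).symm n
  -- the Red facts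
  have hr1 : Red V₁ E₁ := red_Eu_self V₁ hV₁
  have hr2 : Red V₂ E₁ := ⟨maps_Eu comm1, maps_Eu comm2⟩
  have hr3 : Red V₁ E₂ := ⟨maps_Eu comm3, maps_Eu comm4⟩
  have hr4 : Red V₂ E₂ := red_Eu_self V₂ hV₂
  -- projections
  set p₁ : H → H := fun x => (Submodule.orthogonalProjection E₁ x : H) with hp₁
  set p₂ : H → H := fun x => (Submodule.orthogonalProjection E₂ x : H) with hp₂
  have hp₂cont : Continuous p₂ :=
    continuous_subtype_val.comp (Submodule.orthogonalProjection E₂).continuous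
  have hPnp : ∀ (n : ℕ) (x : H), Pn V₁ n (p₂ x) = p₂ (Pn V₁ n x) := by
    intro n x
    have t1 : Tendsto (fun m => Pn V₂ m (Pn V₁ n x)) atTop (nhds (p₂ (Pn V₁ n x))) :=
      tendsto_Pn_proj V₂ hV₂ _
    have t2 : Tendsto (fun m => Pn V₁ n (Pn V₂ m x)) atTop (nhds (Pn V₁ n (p₂ x))) :=
      ((Pn V₁ n).continuous.tendsto _).comp (tendsto_Pn_proj V₂ hV₂ x)
    have he : (fun m => Pn V₁ n (Pn V₂ m x)) = fun m => Pn V₂ m (Pn V₁ n x) := by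
      funext m
      have hcg := congrArg (fun T : H →L[ℂ] H => T x) (commP n m)
      simpa using hcg.symm
    rw [he] at t2
    exact tendsto_nhds_unique t2 t1
  have hpcomm : ∀ x, p₁ (p₂ x) = p₂ (p₁ x) := by
    intro x
    have t1 : Tendsto (fun n => Pn V₁ n (p₂ x)) atTop (nhds (p₁ (p₂ x))) :=
      tendsto_Pn_proj V₁ hV₁ _
    have t2 : Tendsto (fun n => p₂ (Pn V₁ n x)) atTop (nhds (p₂ (p₁ x))) :=
      (hp₂cont.tendsto _).comp (tendsto_Pn_proj V₁ hV₁ x)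
    have he : (fun n => Pn V₁ n (p₂ x)) = fun n => p₂ (Pn V₁ n x) :=
      funext fun n => hPnp n x
    rw [he] at t1
    exact tendsto_nhds_unique t1 t2
  have hmap₁ : ∀ a b : H, p₁ (a - b) = p₁ a - p₁ b := by
    intro a b; simp [hp₁, map_sub]
  have hmap₂ : ∀ a b : H, p₂ (a - b) = p₂ a - p₂ b := by
    intro a b; simp [hp₂, map_sub]
  have hp₁mem : ∀ x, p₁ x ∈ E₁ := fun x => Submodule.coe_mem _
  have hp₂mem : ∀ x, p₂ x ∈ E₂ := fun x => Submodule.coe_mem _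
  have hp₁orth : ∀ x : H, x - p₁ x ∈ E₁ᗮ := fun x =>
    Submodule.sub_starProjection_mem_orthogonal x
  have hp₂orth : ∀ x : H, x - p₂ x ∈ E₂ᗮ := fun x =>
    Submodule.sub_starProjection_mem_orthogonal x
  refine ⟨E₁ ⊓ E₂, E₁ ⊓ E₂ᗮ, E₁ᗮ ⊓ E₂, E₁ᗮ ⊓ E₂ᗮ, ?_, ?_, ?_, ?_, ?_, ?_, ?_, ?_, ?_, ?_,
    ?_, ?_, ?_, ?_, ?_, ?_, ?_, ?_, ?_⟩
  · exact isClosed_inf (isClosed_Eu V₁) (isClosed_Eu V₂)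
  · exact isClosed_inf (isClosed_Eu V₁) E₂.isClosed_orthogonal
  · exact isClosed_inf E₁.isClosed_orthogonal (isClosed_Eu V₂)
  · exact isClosed_inf E₁.isClosed_orthogonal E₂.isClosed_orthogonal
  · exact fun x hx y hy => (Submodule.mem_orthogonal _ _).1 hy.2 x hx.2
  · exact fun x hx y hy => (Submodule.mem_orthogonal _ _).1 hy.1 x hx.1
  · exact fun x hx y hy => (Submodule.mem_orthogonal _ _).1 hy.1 x hx.1
  · exact fun x hx y hy => (Submodule.mem_orthogonal _ _).1 hy.1 x hx.1
  · exact fun x hx y hy => (Submodule.mem_orthogonal _ _).1 hy.1 x hx.1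
  · exact fun x hx y hy => (Submodule.mem_orthogonal _ _).1 hy.2 x hx.2
  · -- the decomposition of the space
    rw [eq_top_iff]
    rintro h -
    have ha : p₁ (p₂ h) ∈ E₁ ⊓ E₂ := by
      refine ⟨hp₁mem _, ?_⟩
      rw [hpcomm]; exact hp₂mem _
    have hc : p₁ h - p₁ (p₂ h) ∈ E₁ ⊓ E₂ᗮ := by
      constructor
      · rw [← hmap₁]; exact hp₁mem _
      · rw [hpcomm]; exact hp₂orth (p₁ h)
    have hb : p₂ h - p₁ (p₂ h) ∈ E₁ᗮ ⊓ E₂ := by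
      constructor
      · exact hp₁orth (p₂ h)
      · rw [hpcomm, ← hmap₂]; exact hp₂mem _
    have hd : h - p₁ h - p₂ h + p₁ (p₂ h) ∈ E₁ᗮ ⊓ E₂ᗮ := by
      constructor
      · have he : h - p₁ h - p₂ h + p₁ (p₂ h) = (h - p₂ h) - p₁ (h - p₂ h) := by
          rw [hmap₁]; abel
        rw [he]; exact hp₁orth _
      · have he : h - p₁ h - p₂ h + p₁ (p₂ h) = (h - p₁ h) - p₂ (h - p₁ h) := by
          rw [hmap₂, hpcomm]; abel
        rw [he]; exact hp₂orth _
    have hsum : h = p₁ (p₂ h) + (p₁ h - p₁ (p₂ h)) + (p₂ h - p₁ (p₂ h)) +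
        (h - p₁ h - p₂ h + p₁ (p₂ h)) := by abel
    rw [hsum]
    exact add_mem (add_mem (add_mem
      (Submodule.mem_sup_left (Submodule.mem_sup_left (Submodule.mem_sup_left ha)))
      (Submodule.mem_sup_left (Submodule.mem_sup_left (Submodule.mem_sup_right hc))))
      (Submodule.mem_sup_left (Submodule.mem_sup_right hb)))
      (Submodule.mem_sup_right hd)
  · exact ⟨Red.inf hr1 hr3, Red.inf hr2 hr4⟩
  · exact ⟨Red.inf hr1 hr3.orthogonal, Red.inf hr2 hr4.orthogonal⟩
  · exact ⟨Red.inf hr1.orthogonal hr3, Red.inf hr2.orthogonal hr4⟩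
  · exact ⟨Red.inf hr1.orthogonal hr3.orthogonal, Red.inf hr2.orthogonal hr4.orthogonal⟩
  · -- unitary on H₁₁
    constructor
    · refine ⟨fun h _ => norm_apply V₁ hV₁ h, fun h hh => ?_⟩
      refine ⟨adjoint V₁ h, ⟨hr1.2 h hh.1, hr3.2 h hh.2⟩, ?_⟩
      have := mem_Eu.1 hh.1 1
      simpa [SWAux.Pn, ContinuousLinearMap.mul_apply] using this
    · refine ⟨fun h _ => norm_apply V₂ hV₂ h, fun h hh => ?_⟩
      refine ⟨adjoint V₂ h, ⟨hr2.2 h hh.1, hr4.2 h hh.2⟩, ?_⟩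
      have := mem_Eu.1 hh.2 1
      simpa [SWAux.Pn, ContinuousLinearMap.mul_apply] using this
  · constructor
    · refine ⟨fun h _ => norm_apply V₁ hV₁ h, fun h hh => ?_⟩
      refine ⟨adjoint V₁ h, ⟨hr1.2 h hh.1, hr3.orthogonal.2 h hh.2⟩, ?_⟩
      have := mem_Eu.1 hh.1 1
      simpa [SWAux.Pn, ContinuousLinearMap.mul_apply] using this
    · exact ⟨fun h _ => norm_apply V₂ hV₂ h,
        fun h hh => pure_on_orthogonal V₂ hV₂ hh.2⟩
  · constructor
    · exact ⟨fun h _ => norm_apply V₁ hV₁ h,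
        fun h hh => pure_on_orthogonal V₁ hV₁ hh.1⟩
    · refine ⟨fun h _ => norm_apply V₂ hV₂ h, fun h hh => ?_⟩
      refine ⟨adjoint V₂ h, ⟨hr2.orthogonal.2 h hh.1, hr4.2 h hh.2⟩, ?_⟩
      have := mem_Eu.1 hh.2 1
      simpa [SWAux.Pn, ContinuousLinearMap.mul_apply] using this
  · exact ⟨⟨fun h _ => norm_apply V₁ hV₁ h,
        fun h hh => pure_on_orthogonal V₁ hV₁ hh.1⟩,
      ⟨fun h _ => norm_apply V₂ hV₂ h,
        fun h hh => pure_on_orthogonal V₂ hV₂ hh.2⟩⟩
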